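/- arXiv:2307.03630 — 2 statements merged into one kernel-verified Lean document; each statement's English description precedes it below -/
import Mathlib

section
/- Let n_p ≥ 1, γ > Γ > 0, K_B, K_C > 0, and 0 < λ < γ − Γ. Let A₀ ∈ ℝ^{n×n} satisfy ‖exp(tA₀)‖ ≤ exp(−γt/2) for all t ≥ 0; let A₁,…,A_{n_p} ∈ ℝ^{n×n} with ‖A_i‖² ≤ Γ/n_p for all i; let B₀,…,B_{n_p} ∈ ℝ^{n×m} with ‖B_i‖ ≤ K_B and C₀,…,C_{n_p} ∈ ℝ^{1×n} with ‖C_i‖ ≤ K_C. Then the weighted kernel series Σ_{i_y,i_u=0}^{n_p} ∫₀^∞ ‖C_{i_y} e^{A₀ t} B_{i_u}‖² e^{λt} dt + Σ_{k=1}^{∞} Σ_{i_y,i_u=0}^{n_p} Σ_{i₁,…,i_k=1}^{n_p} ∫₀^∞ ∫_{0 ≤ τ₁ ≤ ⋯ ≤ τ_k ≤ t} ‖C_{i_y} e^{A₀(t−τ_k)} A_{i_k} e^{A₀(τ_k−τ_{k−1})} ⋯ A_{i₁} e^{A₀τ₁} B_{i_u}‖² e^{λt} dτ₁⋯dτ_k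 dt is finite, and it is bounded above by (n_p+1)² K_C² K_B² / (γ − λ − Γ). -/
open MeasureTheory

/-- The inner part `A_{i_k} e^{A₀(τ_k−τ_{k−1})} A_{i_{k−1}} ⋯ A_{i₁} e^{A₀ τ₁}` of an
iterated Volterra kernel (multiplication of continuous linear maps is composition). -/
noncomputable def volterraMid {E : Type*} [NormedAddCommGroup E] [NormedSpace ℝ E]
    {m : ℕ} (A₀ : E →L[ℝ] E) (A : Fin m → E →L[ℝ] E) :
    (k : ℕ) → (Fin k → Fin m) → (Fin k → ℝ) → (E →L[ℝ] E)
  | 0, _, _ => 1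
  | (k + 1), i, τ =>
      A (i (Fin.last k)) *
        NormedSpace.exp
          ((τ (Fin.last k) - if k = 0 then 0 else τ ⟨k - 1, by omega⟩) • A₀) *
        volterraMid A₀ A k (fun j => i j.castSucc) (fun j => τ j.castSucc)



open Set
open scoped ENNReal

lemma lint_exp (c a : ℝ) (hc : 0 < c) :
    ∫⁻ s : ℝ in Set.Ioi a, ENNReal.ofReal (Real.exp (-(c * s)))
      = ENNReal.ofReal (Real.exp (-(c * a)) / c) := by
  have hint : IntegrableOn (fun x : ℝ => Real.exp (-c * x)) (Set.Ioi a) :=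
    exp_neg_integrableOn_Ioi a hc
  have hval : ∫ x in Set.Ioi a, Real.exp (-c * x) = Real.exp (-c * a) / c := by
    have hderiv : ∀ x ∈ Set.Ici a,
        HasDerivAt (fun x : ℝ => -(Real.exp (-c * x) / c)) (Real.exp (-c * x)) x := by
      intro x _
      have h1 : HasDerivAt (fun x : ℝ => -c * x) (-c) x := by
        simpa using (hasDerivAt_id x).const_mul (-c)
      have h2 := (h1.exp.div_const c).neg
      exact h2.congr_deriv (by rw [mul_neg, neg_div, neg_neg, mul_div_assoc, div_self hc.ne', mul_one])
    have htend : Filter.Tendsto (fun x : ℝ => -(Real.exp (-c * x) / c))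
        Filter.atTop (nhds 0) := by
      have h : Filter.Tendsto (fun x : ℝ => -c * x) Filter.atTop Filter.atBot :=
        Filter.tendsto_id.const_mul_atTop_of_neg (neg_neg_iff_pos.mpr hc)
      have := (Real.tendsto_exp_atBot.comp h).div_const c
      simpa using this.neg
    have := integral_Ioi_of_hasDerivAt_of_tendsto' hderiv hint htend
    rw [this]; ring
  rw [← ofReal_integral_eq_lintegral_ofReal]
  · simp only [neg_mul] at hval ⊢
    rw [hval]
  · have h := hint; simp only [neg_mul] at h; exact h
  · filter_upwards with x using (Real.exp_pos _).le

lemma lint_exp_Ici (c a : ℝ) (hc : 0 < c) :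
    ∫⁻ s : ℝ in Set.Ici a, ENNReal.ofReal (Real.exp (-(c * s)))
      = ENNReal.ofReal (1 / c) * ENNReal.ofReal (Real.exp (-(c * a))) := by
  rw [← setLIntegral_congr (Ioi_ae_eq_Ici (a := a) (μ := volume)), lint_exp c a hc,
    ← ENNReal.ofReal_mul (by positivity)]
  ring_nf

def simplexSet (k : ℕ) : Set (Fin (k + 1) → ℝ) :=
  {τ | 0 ≤ τ 0 ∧ ∀ j : Fin k, τ j.castSucc ≤ τ j.succ}

lemma measurableSet_simplexSet (k : ℕ) : MeasurableSet (simplexSet k) := by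
  have : simplexSet k = {τ : Fin (k+1) → ℝ | 0 ≤ τ 0} ∩
      ⋂ j : Fin k, {τ : Fin (k+1) → ℝ | τ j.castSucc ≤ τ j.succ} := by
    ext τ; simp [simplexSet]
  rw [this]
  exact (measurableSet_le measurable_const (measurable_pi_apply 0)).inter
    (MeasurableSet.iInter fun j =>
      measurableSet_le (measurable_pi_apply _) (measurable_pi_apply _))

lemma simplex_lintegral (c : ℝ) (hc : 0 < c) : ∀ k : ℕ,
    ∫⁻ τ : Fin (k + 1) → ℝ in simplexSet k,
      ENNReal.ofReal (Real.exp (-(c * τ (Fin.last k))))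
      = ENNReal.ofReal (1 / c) ^ (k + 1) := by
  intro k
  induction k with
  | zero =>
    have e : MeasurePreserving (MeasurableEquiv.funUnique (Fin 1) ℝ) volume volume :=
      volume_preserving_funUnique (Fin 1) ℝ
    have hF : Measurable fun τ : Fin 1 → ℝ =>
        (simplexSet 0).indicator
          (fun τ => ENNReal.ofReal (Real.exp (-(c * τ (Fin.last 0))))) τ := by
      refine Measurable.indicator ?_ (measurableSet_simplexSet 0)
      fun_prop
    rw [← lintegral_indicator (measurableSet_simplexSet 0) _]
    show (∫⁻ a : Fin 1 → ℝ, (simplexSet 0).indicator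
      (fun τ => ENNReal.ofReal (Real.exp (-(c * τ (Fin.last 0))))) a) = ENNReal.ofReal (1 / c) ^ (0 + 1)
    refine (((volume_preserving_funUnique (Fin 1) ℝ).symm _).lintegral_comp hF).symm.trans ?_
    have : ∀ x : ℝ, (simplexSet 0).indicator
        (fun τ => ENNReal.ofReal (Real.exp (-(c * τ (Fin.last 0)))))
        ((MeasurableEquiv.funUnique (Fin 1) ℝ).symm x)
        = (Set.Ici (0:ℝ)).indicator (fun s => ENNReal.ofReal (Real.exp (-(c * s)))) x := by
      intro x
      have hmem : ((MeasurableEquiv.funUnique (Fin 1) ℝ).symm x ∈ simplexSet 0) ↔ 0 ≤ x := by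
        simp [simplexSet, MeasurableEquiv.funUnique]
      by_cases hx : 0 ≤ x
      · rw [Set.indicator_of_mem (hmem.mpr hx), Set.indicator_of_mem (Set.mem_Ici.mpr hx)]
        simp [MeasurableEquiv.funUnique]
      · rw [Set.indicator_of_notMem (fun h => hx (hmem.mp h)), Set.indicator_of_notMem (by simpa using hx)]
    simp_rw [this]
    rw [lintegral_indicator measurableSet_Ici _, lint_exp_Ici c 0 hc]
    simp
  | succ k ih =>
    set F : (Fin (k + 2) → ℝ) → ℝ≥0∞ := (simplexSet (k + 1)).indicator
      (fun τ => ENNReal.ofReal (Real.exp (-(c * τ (Fin.last (k + 1)))))) with hFdef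
    have hF : Measurable F := by
      refine Measurable.indicator ?_ (measurableSet_simplexSet (k + 1))
      fun_prop
    set e := MeasurableEquiv.piFinSuccAbove (fun _ : Fin (k + 2) => ℝ) (Fin.last (k + 1))
      with hedef
    have hsnoc : ∀ p : ℝ × (Fin (k + 1) → ℝ), e.symm p = Fin.snoc p.2 p.1 := by
      intro p
      rw [hedef, MeasurableEquiv.piFinSuccAbove_symm_apply]
      simp [Fin.insertNthEquiv, Fin.insertNth_last']
    have hmem : ∀ (s : ℝ) (τ' : Fin (k + 1) → ℝ),
        (Fin.snoc τ' s ∈ simplexSet (k + 1)) ↔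
          (τ' ∈ simplexSet k ∧ τ' (Fin.last k) ≤ s) := by
      intro s τ'
      simp only [simplexSet, Set.mem_setOf_eq, Fin.forall_fin_succ', Fin.succ_castSucc,
        Fin.snoc_castSucc, Fin.succ_last, Fin.snoc_last, ← Fin.castSucc_zero]
      tauto
    have hmeas2 : Measurable fun p : ℝ × (Fin (k + 1) → ℝ) => F (e.symm p) :=
      hF.comp e.symm.measurable
    rw [← lintegral_indicator (measurableSet_simplexSet (k + 1)) _]
    rw [show (∫⁻ a : Fin (k + 2) → ℝ, (simplexSet (k + 1)).indicator
        (fun τ => ENNReal.ofReal (Real.exp (-(c * τ (Fin.last (k + 1)))))) a) = ∫⁻ a, F a from rfl]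
    rw [← ((volume_preserving_piFinSuccAbove (fun _ : Fin (k + 2) => ℝ)
      (Fin.last (k + 1))).symm _).lintegral_comp hF]
    rw [show (volume : Measure (ℝ × (Fin (k + 1) → ℝ))) = volume.prod volume from rfl]
    rw [lintegral_prod_symm _ hmeas2.aemeasurable]
    have key : ∀ τ' : Fin (k + 1) → ℝ, (∫⁻ s : ℝ, F (e.symm (s, τ'))) =
        (simplexSet k).indicator (fun τ'' => ENNReal.ofReal (1 / c) *
          ENNReal.ofReal (Real.exp (-(c * τ'' (Fin.last k))))) τ' := by
      intro τ'
      by_cases hτ : τ' ∈ simplexSet k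
      · have heq : ∀ s : ℝ, F (e.symm (s, τ')) = (Set.Ici (τ' (Fin.last k))).indicator
            (fun s => ENNReal.ofReal (Real.exp (-(c * s)))) s := by
          intro s
          rw [hsnoc]
          by_cases hs : τ' (Fin.last k) ≤ s
          · rw [hFdef, Set.indicator_of_mem ((hmem s τ').mpr ⟨hτ, hs⟩),
              Set.indicator_of_mem (Set.mem_Ici.mpr hs)]
            simp [Fin.snoc_last]
          · rw [hFdef, Set.indicator_of_notMem (fun h => hs ((hmem s τ').mp h).2),
              Set.indicator_of_notMem (by simpa using hs)]
        simp_rw [heq]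
        rw [lintegral_indicator measurableSet_Ici _, lint_exp_Ici c _ hc,
          Set.indicator_of_mem hτ]
      · have heq : ∀ s : ℝ, F (e.symm (s, τ')) = 0 := by
          intro s
          rw [hsnoc, hFdef]
          exact Set.indicator_of_notMem (fun h => hτ ((hmem s τ').mp h).1) _
        simp_rw [heq]
        rw [Set.indicator_of_notMem hτ]
        simp
    rw [lintegral_congr key, lintegral_indicator (measurableSet_simplexSet k) _,
      lintegral_const_mul' _ _ (by simp), ih]
    ring

def regionSet (k : ℕ) : Set (ℝ × (Fin (k + 1) → ℝ)) :=
  {x | 0 ≤ x.2 0 ∧ (∀ j : Fin k, x.2 j.castSucc ≤ x.2 j.succ) ∧ x.2 (Fin.last k) ≤ x.1}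

lemma measurableSet_regionSet (k : ℕ) : MeasurableSet (regionSet k) := by
  have : regionSet k = {x : ℝ × (Fin (k + 1) → ℝ) | 0 ≤ x.2 0} ∩
      ((⋂ j : Fin k, {x : ℝ × (Fin (k + 1) → ℝ) | x.2 j.castSucc ≤ x.2 j.succ}) ∩
        {x : ℝ × (Fin (k + 1) → ℝ) | x.2 (Fin.last k) ≤ x.1}) := by
    ext x; simp [regionSet]
  rw [this]
  have h2 : ∀ j : Fin (k + 1), Measurable fun x : ℝ × (Fin (k + 1) → ℝ) => x.2 j :=
    fun j => (measurable_pi_apply j).comp measurable_snd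
  exact (measurableSet_le measurable_const (h2 0)).inter
    ((MeasurableSet.iInter fun j => measurableSet_le (h2 _) (h2 _)).inter
      (measurableSet_le (h2 _) measurable_fst))

lemma region_mem_iff (k : ℕ) (x : ℝ × (Fin (k + 1) → ℝ)) :
    x ∈ regionSet k ↔ (x.2 ∈ simplexSet k ∧ x.2 (Fin.last k) ≤ x.1) := by
  simp [regionSet, simplexSet, and_assoc]

lemma region_lintegral (c D : ℝ) (hc : 0 < c) (hD : 0 ≤ D) (k : ℕ) :
    ∫⁻ x : ℝ × (Fin (k + 1) → ℝ) in regionSet k,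
        ENNReal.ofReal (D * Real.exp (-(c * x.1)))
      = ENNReal.ofReal D * ENNReal.ofReal (1 / c) ^ (k + 2) := by
  set F : ℝ × (Fin (k + 1) → ℝ) → ℝ≥0∞ := (regionSet k).indicator
    (fun x => ENNReal.ofReal (D * Real.exp (-(c * x.1)))) with hFdef
  have hF : Measurable F := by
    refine Measurable.indicator ?_ (measurableSet_regionSet k)
    exact ((Real.measurable_exp.comp (measurable_fst.const_mul c).neg).const_mul D).ennreal_ofReal
  rw [← lintegral_indicator (measurableSet_regionSet k) _]
  rw [show (∫⁻ x : ℝ × (Fin (k + 1) → ℝ), (regionSet k).indicator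
      (fun x => ENNReal.ofReal (D * Real.exp (-(c * x.1)))) x) = ∫⁻ x, F x from rfl]
  rw [show (volume : Measure (ℝ × (Fin (k + 1) → ℝ))) = volume.prod volume from rfl]
  rw [lintegral_prod_symm _ hF.aemeasurable]
  have key : ∀ τ : Fin (k + 1) → ℝ, (∫⁻ t : ℝ, F (t, τ)) =
      (simplexSet k).indicator (fun τ' => (ENNReal.ofReal D * ENNReal.ofReal (1 / c)) *
        ENNReal.ofReal (Real.exp (-(c * τ' (Fin.last k))))) τ := by
    intro τ
    by_cases hτ : τ ∈ simplexSet k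
    · have heq : ∀ t : ℝ, F (t, τ) = (Set.Ici (τ (Fin.last k))).indicator
          (fun t => ENNReal.ofReal (D * Real.exp (-(c * t)))) t := by
        intro t
        by_cases ht : τ (Fin.last k) ≤ t
        · rw [hFdef, Set.indicator_of_mem ((region_mem_iff k (t, τ)).mpr ⟨hτ, ht⟩),
            Set.indicator_of_mem (Set.mem_Ici.mpr ht)]
        · rw [hFdef, Set.indicator_of_notMem
              (fun h => ht ((region_mem_iff k (t, τ)).mp h).2),
            Set.indicator_of_notMem (by simpa using ht)]
      simp_rw [heq]
      rw [lintegral_indicator measurableSet_Ici _, Set.indicator_of_mem hτ]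
      simp_rw [ENNReal.ofReal_mul hD]
      rw [lintegral_const_mul' _ _ ENNReal.ofReal_ne_top, lint_exp_Ici c _ hc]
      ring
    · have heq : ∀ t : ℝ, F (t, τ) = 0 := fun t =>
        Set.indicator_of_notMem (fun h => hτ ((region_mem_iff k (t, τ)).mp h).1) _
      simp_rw [heq]
      rw [Set.indicator_of_notMem hτ]
      simp
  rw [lintegral_congr key, lintegral_indicator (measurableSet_simplexSet k) _,
    lintegral_const_mul' _ _ (by finiteness), simplex_lintegral c hc k]
  ring

lemma volterraMid_norm_le {n np : ℕ} (γ : ℝ)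
    (A₀ : EuclideanSpace ℝ (Fin n) →L[ℝ] EuclideanSpace ℝ (Fin n))
    (hA₀ : ∀ t : ℝ, 0 ≤ t → ‖NormedSpace.exp (t • A₀)‖ ≤ Real.exp (-(γ * t) / 2))
    (A : Fin np → EuclideanSpace ℝ (Fin n) →L[ℝ] EuclideanSpace ℝ (Fin n))
    (a : ℝ) (ha : 0 ≤ a) (hA : ∀ i, ‖A i‖ ≤ a) :
    ∀ (K : ℕ) (i : Fin K → Fin np) (τ : Fin K → ℝ), Monotone τ → (∀ j, 0 ≤ τ j) →
      ‖volterraMid A₀ A K i τ‖ ≤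
        a ^ K * Real.exp (-(γ * (if h : 0 < K then τ ⟨K - 1, by omega⟩ else 0)) / 2) := by
  intro K
  induction K with
  | zero =>
    intro i τ _ _
    calc ‖volterraMid A₀ A 0 i τ‖ ≤ 1 := by
          rw [show volterraMid A₀ A 0 i τ = 1 from rfl, ContinuousLinearMap.one_def]
          exact ContinuousLinearMap.norm_id_le
      _ = _ := by rw [dif_neg (lt_irrefl 0)]; simp
  | succ K ih =>
    intro i τ hmono h0
    have hprev : (if K = 0 then (0:ℝ) else τ ⟨K - 1, by omega⟩)
        = (if h : 0 < K then (fun j : Fin K => τ j.castSucc) ⟨K - 1, by omega⟩ else 0) := by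
      rcases Nat.eq_zero_or_pos K with h | h
      · simp [h]
      · rw [if_neg (Nat.pos_iff_ne_zero.mp h), dif_pos h]
        rfl
    set prev : ℝ := if K = 0 then (0:ℝ) else τ ⟨K - 1, by omega⟩ with hprevdef
    have hprev_le : prev ≤ τ (Fin.last K) := by
      rcases Nat.eq_zero_or_pos K with h | h
      · rw [hprevdef, if_pos h]; exact h0 _
      · rw [hprevdef, if_neg (Nat.pos_iff_ne_zero.mp h)]
        refine hmono ?_
        rw [Fin.le_def]
        exact Nat.sub_le K 1
    have hd : 0 ≤ τ (Fin.last K) - prev := by linarith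
    have hexp := hA₀ _ hd
    have hA' := hA (i (Fin.last K))
    have hih := ih (fun j => i j.castSucc) (fun j => τ j.castSucc)
      (hmono.comp (Fin.strictMono_castSucc.monotone)) (fun j => h0 _)
    show ‖A (i (Fin.last K)) * NormedSpace.exp ((τ (Fin.last K) - prev) • A₀) *
        volterraMid A₀ A K (fun j => i j.castSucc) (fun j => τ j.castSucc)‖ ≤ _
    calc ‖A (i (Fin.last K)) * NormedSpace.exp ((τ (Fin.last K) - prev) • A₀) *
          volterraMid A₀ A K (fun j => i j.castSucc) (fun j => τ j.castSucc)‖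
        ≤ ‖A (i (Fin.last K)) * NormedSpace.exp ((τ (Fin.last K) - prev) • A₀)‖ *
          ‖volterraMid A₀ A K (fun j => i j.castSucc) (fun j => τ j.castSucc)‖ :=
          norm_mul_le _ _
      _ ≤ (‖A (i (Fin.last K))‖ * ‖NormedSpace.exp ((τ (Fin.last K) - prev) • A₀)‖) *
          ‖volterraMid A₀ A K (fun j => i j.castSucc) (fun j => τ j.castSucc)‖ :=
          mul_le_mul_of_nonneg_right (norm_mul_le _ _) (norm_nonneg _)
      _ ≤ (a * Real.exp (-(γ * (τ (Fin.last K) - prev)) / 2)) *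
          (a ^ K * Real.exp (-(γ * prev) / 2)) := by
          rw [← hprev] at hih
          exact mul_le_mul
            (mul_le_mul hA' hexp (norm_nonneg _) ha)
            hih (norm_nonneg _)
            (by positivity)
      _ = a ^ (K + 1) * Real.exp (-(γ * τ (Fin.last K)) / 2) := by
          have hee : Real.exp (-(γ * (τ (Fin.last K) - prev)) / 2) *
              Real.exp (-(γ * prev) / 2) = Real.exp (-(γ * τ (Fin.last K)) / 2) := by
            rw [← Real.exp_add]; congr 1; ring
          rw [← hee]; ring
      _ = a ^ (K + 1) * Real.exp (-(γ * (if h : 0 < K + 1 then τ ⟨K + 1 - 1, by omega⟩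
            else 0)) / 2) := by
          rw [dif_pos (Nat.succ_pos K)]
          rfl

/-- finiteness and explicit bound of the weighted Volterra kernel series
(the squared weighted `H₂` norm) under the exponential-decay assumption
`‖e^{tA₀}‖ ≤ e^{−γt/2}`, `‖A_i‖² ≤ Γ/n_p`, `‖B_i‖ ≤ K_B`, `‖C_i‖ ≤ K_C`, `0 < λ < γ − Γ`.
The sum over `k ≥ 1` kernels (with `i₁,…,i_k ∈ {1,…,n_p}`) is indexed here by tuples
`i : Fin (k+1) → Fin n_p`, and each iterated integral over the simplex
`0 ≤ τ₁ ≤ ⋯ ≤ τ_k ≤ t` is a Lebesgue integral over `ℝ × (Fin (k+1) → ℝ)`.  The total is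
at most `(n_p+1)² K_C² K_B² / (γ − λ − Γ)` (in particular it is finite). -/
theorem weighted_H2_norm_bound {n m : ℕ} (np : ℕ) (hnp : 1 ≤ np)
    (γ Γ K_B K_C lam : ℝ) (hΓ : 0 < Γ) (hγΓ : Γ < γ)
    (hKB : 0 < K_B) (hKC : 0 < K_C) (hlam0 : 0 < lam) (hlam : lam < γ - Γ)
    (A₀ : EuclideanSpace ℝ (Fin n) →L[ℝ] EuclideanSpace ℝ (Fin n))
    (hA₀ : ∀ t : ℝ, 0 ≤ t → ‖NormedSpace.exp (t • A₀)‖ ≤ Real.exp (-(γ * t) / 2))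
    (A : Fin np → EuclideanSpace ℝ (Fin n) →L[ℝ] EuclideanSpace ℝ (Fin n))
    (hA : ∀ i, ‖A i‖ ^ 2 ≤ Γ / np)
    (B : Fin (np + 1) → EuclideanSpace ℝ (Fin m) →L[ℝ] EuclideanSpace ℝ (Fin n))
    (hB : ∀ i, ‖B i‖ ≤ K_B)
    (C : Fin (np + 1) → EuclideanSpace ℝ (Fin n) →L[ℝ] ℝ)
    (hC : ∀ i, ‖C i‖ ≤ K_C) :
    (∑ iy : Fin (np + 1), ∑ iu : Fin (np + 1),
        ∫⁻ t in Set.Ioi (0 : ℝ),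
          ENNReal.ofReal
            (‖(C iy).comp ((NormedSpace.exp (t • A₀)).comp (B iu))‖ ^ 2 *
              Real.exp (lam * t)))
      + ∑' k : ℕ, ∑ iy : Fin (np + 1), ∑ iu : Fin (np + 1),
          ∑ i : Fin (k + 1) → Fin np,
            ∫⁻ x : ℝ × (Fin (k + 1) → ℝ) in
              {x : ℝ × (Fin (k + 1) → ℝ) |
                0 ≤ x.2 0 ∧ (∀ j : Fin k, x.2 j.castSucc ≤ x.2 j.succ) ∧
                  x.2 (Fin.last k) ≤ x.1},
              ENNReal.ofReal
                (‖(C iy).comp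
                    ((NormedSpace.exp ((x.1 - x.2 (Fin.last k)) • A₀) *
                        volterraMid A₀ A (k + 1) i x.2).comp (B iu))‖ ^ 2 *
                  Real.exp (lam * x.1))
      ≤ ENNReal.ofReal (((np : ℝ) + 1) ^ 2 * K_C ^ 2 * K_B ^ 2 / (γ - lam - Γ)) := by
  have hnp0 : (0:ℝ) < np := by exact_mod_cast hnp
  set c : ℝ := γ - lam with hcdef
  have hΓc : Γ < c := by rw [hcdef]; linarith
  have hc : 0 < c := lt_trans hΓ hΓc
  set a : ℝ := Real.sqrt (Γ / np) with hadef
  have hΓnp : 0 ≤ Γ / np := div_nonneg hΓ.le hnp0.le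
  have ha : 0 ≤ a := Real.sqrt_nonneg _
  have ha2 : a ^ 2 = Γ / np := Real.sq_sqrt hΓnp
  have haA : ∀ i, ‖A i‖ ≤ a := fun i =>
    (Real.le_sqrt (norm_nonneg _) hΓnp).mpr (hA i)
  have hKK : (0:ℝ) ≤ K_C * K_B := by positivity
  -- the k = 0 term
  have hterm0 : ∀ iy iu : Fin (np + 1),
      (∫⁻ t in Set.Ioi (0 : ℝ),
        ENNReal.ofReal
          (‖(C iy).comp ((NormedSpace.exp (t • A₀)).comp (B iu))‖ ^ 2 *
            Real.exp (lam * t)))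
      ≤ ENNReal.ofReal (K_C ^ 2 * K_B ^ 2) * ENNReal.ofReal (1 / c) := by
    intro iy iu
    have hmono : ∀ t ∈ Set.Ioi (0:ℝ),
        ENNReal.ofReal
          (‖(C iy).comp ((NormedSpace.exp (t • A₀)).comp (B iu))‖ ^ 2 *
            Real.exp (lam * t))
        ≤ ENNReal.ofReal (K_C ^ 2 * K_B ^ 2 * Real.exp (-(c * t))) := by
      intro t ht
      have ht' : (0:ℝ) ≤ t := (le_of_lt ht)
      apply ENNReal.ofReal_le_ofReal
      have h1 : ‖(C iy).comp ((NormedSpace.exp (t • A₀)).comp (B iu))‖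
          ≤ K_C * (Real.exp (-(γ * t) / 2) * K_B) := by
        refine le_trans (ContinuousLinearMap.opNorm_comp_le _ _) ?_
        refine mul_le_mul (hC iy) ?_ (norm_nonneg _) hKC.le
        refine le_trans (ContinuousLinearMap.opNorm_comp_le _ _) ?_
        exact mul_le_mul (hA₀ t ht') (hB iu) (norm_nonneg _) (Real.exp_pos _).le
      have h2 : ‖(C iy).comp ((NormedSpace.exp (t • A₀)).comp (B iu))‖ ^ 2 *
          Real.exp (lam * t)
          ≤ (K_C * (Real.exp (-(γ * t) / 2) * K_B)) ^ 2 * Real.exp (lam * t) :=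
        mul_le_mul_of_nonneg_right
          (pow_le_pow_left₀ (norm_nonneg _) h1 2) (Real.exp_pos _).le
      refine le_trans h2 (le_of_eq ?_)
      have hee : Real.exp (-(γ * t) / 2) * Real.exp (-(γ * t) / 2) *
          Real.exp (lam * t) = Real.exp (-(c * t)) := by
        rw [← Real.exp_add, ← Real.exp_add, hcdef]
        congr 1; ring
      calc (K_C * (Real.exp (-(γ * t) / 2) * K_B)) ^ 2 * Real.exp (lam * t)
          = K_C ^ 2 * K_B ^ 2 * (Real.exp (-(γ * t) / 2) * Real.exp (-(γ * t) / 2) *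
            Real.exp (lam * t)) := by ring
        _ = K_C ^ 2 * K_B ^ 2 * Real.exp (-(c * t)) := by rw [hee]
    refine le_trans (setLIntegral_mono ?_ hmono) ?_
    · exact ((Real.measurable_exp.comp (measurable_id.const_mul c).neg).const_mul
        _).ennreal_ofReal
    · simp_rw [ENNReal.ofReal_mul (by positivity : (0:ℝ) ≤ K_C ^ 2 * K_B ^ 2)]
      rw [lintegral_const_mul' _ _ ENNReal.ofReal_ne_top, lint_exp c 0 hc]
      simp
  -- the k ≥ 1 terms
  have htermk : ∀ (k : ℕ) (iy iu : Fin (np + 1)) (i : Fin (k + 1) → Fin np),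
      (∫⁻ x : ℝ × (Fin (k + 1) → ℝ) in regionSet k,
        ENNReal.ofReal
          (‖(C iy).comp
              ((NormedSpace.exp ((x.1 - x.2 (Fin.last k)) • A₀) *
                  volterraMid A₀ A (k + 1) i x.2).comp (B iu))‖ ^ 2 *
            Real.exp (lam * x.1)))
      ≤ ENNReal.ofReal (K_C ^ 2 * K_B ^ 2 * (Γ / np) ^ (k + 1)) *
          ENNReal.ofReal (1 / c) ^ (k + 2) := by
    intro k iy iu i
    have hmono : ∀ x ∈ regionSet k,
        ENNReal.ofReal
          (‖(C iy).comp
              ((NormedSpace.exp ((x.1 - x.2 (Fin.last k)) • A₀) *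
                  volterraMid A₀ A (k + 1) i x.2).comp (B iu))‖ ^ 2 *
            Real.exp (lam * x.1))
        ≤ ENNReal.ofReal ((K_C ^ 2 * K_B ^ 2 * (Γ / np) ^ (k + 1)) *
            Real.exp (-(c * x.1))) := by
      intro x hx
      obtain ⟨hxs, hxle⟩ := (region_mem_iff k x).mp hx
      have hτmono : Monotone x.2 := Fin.monotone_iff_le_succ.mpr hxs.2
      have hτ0 : ∀ j, 0 ≤ x.2 j := fun j => le_trans hxs.1 (hτmono (Fin.zero_le j))
      have hmid := volterraMid_norm_le γ A₀ hA₀ A a ha haA (k + 1) i x.2 hτmono hτ0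
      rw [dif_pos (Nat.succ_pos k)] at hmid
      have hlast : (⟨k + 1 - 1, by omega⟩ : Fin (k + 1)) = Fin.last k := rfl
      rw [hlast] at hmid
      have hd : 0 ≤ x.1 - x.2 (Fin.last k) := by linarith
      have hexp1 := hA₀ _ hd
      apply ENNReal.ofReal_le_ofReal
      have hM : ‖NormedSpace.exp ((x.1 - x.2 (Fin.last k)) • A₀) *
          volterraMid A₀ A (k + 1) i x.2‖
          ≤ Real.exp (-(γ * (x.1 - x.2 (Fin.last k))) / 2) *
            (a ^ (k + 1) * Real.exp (-(γ * x.2 (Fin.last k)) / 2)) :=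
        le_trans (norm_mul_le _ _)
          (mul_le_mul hexp1 hmid (norm_nonneg _) (Real.exp_pos _).le)
      have h1 : ‖(C iy).comp
            ((NormedSpace.exp ((x.1 - x.2 (Fin.last k)) • A₀) *
                volterraMid A₀ A (k + 1) i x.2).comp (B iu))‖
          ≤ K_C * ((Real.exp (-(γ * (x.1 - x.2 (Fin.last k))) / 2) *
            (a ^ (k + 1) * Real.exp (-(γ * x.2 (Fin.last k)) / 2))) * K_B) := by
        refine le_trans (ContinuousLinearMap.opNorm_comp_le _ _) ?_
        refine mul_le_mul (hC iy) ?_ (norm_nonneg _) hKC.le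
        refine le_trans (ContinuousLinearMap.opNorm_comp_le _ _) ?_
        exact mul_le_mul hM (hB iu) (norm_nonneg _)
          (by positivity)
      have h2 := mul_le_mul_of_nonneg_right
        (pow_le_pow_left₀ (norm_nonneg _) h1 2) (Real.exp_pos (lam * x.1)).le
      refine le_trans h2 (le_of_eq ?_)
      have hee : (Real.exp (-(γ * (x.1 - x.2 (Fin.last k))) / 2) *
          Real.exp (-(γ * x.2 (Fin.last k)) / 2)) ^ 2 * Real.exp (lam * x.1)
          = Real.exp (-(c * x.1)) := by
        rw [← Real.exp_add, pow_two, ← Real.exp_add, ← Real.exp_add, hcdef]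
        congr 1; ring
      calc (K_C * ((Real.exp (-(γ * (x.1 - x.2 (Fin.last k))) / 2) *
            (a ^ (k + 1) * Real.exp (-(γ * x.2 (Fin.last k)) / 2))) * K_B)) ^ 2 *
            Real.exp (lam * x.1)
          = K_C ^ 2 * K_B ^ 2 * (a ^ 2) ^ (k + 1) *
            ((Real.exp (-(γ * (x.1 - x.2 (Fin.last k))) / 2) *
              Real.exp (-(γ * x.2 (Fin.last k)) / 2)) ^ 2 * Real.exp (lam * x.1)) := by
            ring
        _ = K_C ^ 2 * K_B ^ 2 * (Γ / np) ^ (k + 1) * Real.exp (-(c * x.1)) := by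
            rw [hee, ha2]
    refine le_trans (setLIntegral_mono ?_ hmono) ?_
    · exact ((Real.measurable_exp.comp (measurable_fst.const_mul c).neg).const_mul
        _).ennreal_ofReal
    · rw [region_lintegral c _ hc (by positivity) k]
  -- assemble
  set P : ℝ≥0∞ := ENNReal.ofReal (K_C ^ 2 * K_B ^ 2) with hPdef
  set u : ℝ≥0∞ := ENNReal.ofReal (1 / c) with hudef
  set q : ℝ≥0∞ := ENNReal.ofReal (Γ / c) with hqdef
  set Nc : ℝ≥0∞ := ((np + 1 : ℕ) : ℝ≥0∞) with hNdef
  have hstep0 : (∑ iy : Fin (np + 1), ∑ iu : Fin (np + 1),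
      ∫⁻ t in Set.Ioi (0 : ℝ),
        ENNReal.ofReal
          (‖(C iy).comp ((NormedSpace.exp (t • A₀)).comp (B iu))‖ ^ 2 *
            Real.exp (lam * t))) ≤ Nc * Nc * (P * u) := by
    calc (∑ iy : Fin (np + 1), ∑ iu : Fin (np + 1), _)
        ≤ ∑ _iy : Fin (np + 1), ∑ _iu : Fin (np + 1), P * u :=
          Finset.sum_le_sum fun iy _ => Finset.sum_le_sum fun iu _ => hterm0 iy iu
      _ = Nc * Nc * (P * u) := by
          simp [Finset.sum_const, Finset.card_univ, nsmul_eq_mul, hNdef]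
          ring
  have hDk : ∀ k : ℕ, ((np : ℝ≥0∞) ^ (k + 1)) *
      (ENNReal.ofReal (K_C ^ 2 * K_B ^ 2 * (Γ / np) ^ (k + 1)) * u ^ (k + 2))
      = P * u * q ^ (k + 1) := by
    intro k
    have e1 : (np : ℝ≥0∞) * ENNReal.ofReal (Γ / np) = ENNReal.ofReal Γ := by
      rw [show ((np : ℝ≥0∞)) = ENNReal.ofReal (np : ℝ) by simp,
        ← ENNReal.ofReal_mul hnp0.le]
      rw [mul_div_cancel₀ _ hnp0.ne']
    have e2 : ENNReal.ofReal Γ * u = q := by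
      rw [hudef, hqdef, ← ENNReal.ofReal_mul hΓ.le, mul_one_div]
    rw [ENNReal.ofReal_mul (by positivity : (0:ℝ) ≤ K_C ^ 2 * K_B ^ 2),
      ENNReal.ofReal_pow hΓnp, ← hPdef]
    calc ((np : ℝ≥0∞) ^ (k + 1)) * (P * ENNReal.ofReal (Γ / np) ^ (k + 1) * u ^ (k + 2))
        = P * u * ((np : ℝ≥0∞) * ENNReal.ofReal (Γ / np) * u) ^ (k + 1) := by
          rw [mul_pow, mul_pow, pow_succ]
          ring
      _ = P * u * q ^ (k + 1) := by rw [e1, e2]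
  have hstepk : ∀ k : ℕ, (∑ iy : Fin (np + 1), ∑ iu : Fin (np + 1),
      ∑ i : Fin (k + 1) → Fin np,
        ∫⁻ x : ℝ × (Fin (k + 1) → ℝ) in regionSet k,
          ENNReal.ofReal
            (‖(C iy).comp
                ((NormedSpace.exp ((x.1 - x.2 (Fin.last k)) • A₀) *
                    volterraMid A₀ A (k + 1) i x.2).comp (B iu))‖ ^ 2 *
              Real.exp (lam * x.1)))
      ≤ Nc * Nc * (P * u * q ^ (k + 1)) := by
    intro k
    calc (∑ iy : Fin (np + 1), ∑ iu : Fin (np + 1), ∑ i : Fin (k + 1) → Fin np, _)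
        ≤ ∑ _iy : Fin (np + 1), ∑ _iu : Fin (np + 1), ∑ _i : Fin (k + 1) → Fin np,
            ENNReal.ofReal (K_C ^ 2 * K_B ^ 2 * (Γ / np) ^ (k + 1)) *
              ENNReal.ofReal (1 / c) ^ (k + 2) :=
          Finset.sum_le_sum fun iy _ => Finset.sum_le_sum fun iu _ =>
            Finset.sum_le_sum fun i _ => htermk k iy iu i
      _ = Nc * Nc * (((np : ℝ≥0∞) ^ (k + 1)) *
          (ENNReal.ofReal (K_C ^ 2 * K_B ^ 2 * (Γ / np) ^ (k + 1)) * u ^ (k + 2))) := by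
          simp [Finset.sum_const, Finset.card_univ, nsmul_eq_mul, hNdef, hudef]
          ring
      _ = Nc * Nc * (P * u * q ^ (k + 1)) := by rw [hDk k]
  have hregion : ∀ k : ℕ, {x : ℝ × (Fin (k + 1) → ℝ) |
      0 ≤ x.2 0 ∧ (∀ j : Fin k, x.2 j.castSucc ≤ x.2 j.succ) ∧
        x.2 (Fin.last k) ≤ x.1} = regionSet k := fun k => rfl
  have hq1 : q < 1 := by
    rw [hqdef, ← ENNReal.ofReal_one]
    exact ENNReal.ofReal_lt_ofReal_iff_of_nonneg (div_nonneg hΓ.le hc.le) |>.mpr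
      ((div_lt_one hc).mpr hΓc)
  have hgeom : (1 : ℝ≥0∞) + q * (1 - q)⁻¹ = (1 - q)⁻¹ := by
    have h1q : (1 : ℝ≥0∞) - q ≠ 0 := by
      simp only [ne_eq, tsub_eq_zero_iff_le, not_le]
      exact hq1
    have hmulinv : ((1 : ℝ≥0∞) - q) * (1 - q)⁻¹ = 1 :=
      ENNReal.mul_inv_cancel h1q (by finiteness)
    calc (1 : ℝ≥0∞) + q * (1 - q)⁻¹ = (1 - q) * (1 - q)⁻¹ + q * (1 - q)⁻¹ := by
          rw [hmulinv]
      _ = ((1 - q) + q) * (1 - q)⁻¹ := by rw [add_mul]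
      _ = 1 * (1 - q)⁻¹ := by rw [tsub_add_cancel_of_le hq1.le]
      _ = (1 - q)⁻¹ := one_mul _
  have hfinal : Nc * Nc * (P * u) * (1 - q)⁻¹
      ≤ ENNReal.ofReal (((np : ℝ) + 1) ^ 2 * K_C ^ 2 * K_B ^ 2 / (γ - lam - Γ)) := by
    have hsub : (1 : ℝ≥0∞) - q = ENNReal.ofReal (1 - Γ / c) := by
      rw [hqdef, ENNReal.ofReal_sub _ (div_nonneg hΓ.le hc.le), ENNReal.ofReal_one]
    have hpos : (0:ℝ) < 1 - Γ / c := by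
      rw [sub_pos]
      exact (div_lt_one hc).mpr hΓc
    rw [hsub, ← ENNReal.ofReal_inv_of_pos hpos, hNdef, hPdef, hudef]
    rw [show (((np + 1 : ℕ) : ℝ≥0∞)) = ENNReal.ofReal ((np : ℝ) + 1) by
      rw [← ENNReal.ofReal_natCast]; norm_num]
    rw [← ENNReal.ofReal_mul (by positivity), ← ENNReal.ofReal_mul (by positivity),
      ← ENNReal.ofReal_mul (by positivity), ← ENNReal.ofReal_mul (by positivity)]
    apply le_of_eq
    congr 1
    have hc0 : c ≠ 0 := hc.ne'
    have hcΓ0 : c - Γ ≠ 0 := sub_ne_zero_of_ne hΓc.ne'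
    rw [hcdef] at hc0 hcΓ0 ⊢
    field_simp
  calc _ ≤ Nc * Nc * (P * u) + ∑' k : ℕ, Nc * Nc * (P * u * q ^ (k + 1)) := by
        refine add_le_add hstep0 (ENNReal.tsum_le_tsum fun k => ?_)
        rw [hregion k]
        exact hstepk k
    _ = Nc * Nc * (P * u) * (1 + q * (1 - q)⁻¹) := by
        have hrearr : ∀ k : ℕ, Nc * Nc * (P * u * q ^ (k + 1))
            = (Nc * Nc * (P * u)) * q ^ (k + 1) := fun k => by ring
        simp_rw [hrearr]
        rw [ENNReal.tsum_mul_left, ENNReal.tsum_geometric_add_one]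
        ring
    _ = Nc * Nc * (P * u) * (1 - q)⁻¹ := by rw [hgeom]
    _ ≤ _ := hfinal
end

section
/- Let T > 0, n_p ≥ 1, λ ≥ n_p, let u ∈ L²([0,T], ℝ^m), and let p₀, p₁, …, p_{n_p} : [0,T] → [−1,1] be measurable functions (with p₀ ≡ 1 allowed). Then Σ_{r,q=0}^{n_p} ∫₀^T (p_q(T))² (p_r(τ))² ‖u(τ)‖² e^{−λ(T−τ)} dτ + Σ_{k=1}^{∞} Σ_{r,q₀=0}^{n_p} Σ_{q₁,…,q_k=1}^{n_p} ∫₀^T ∫_{0 ≤ τ₁ ≤ ⋯ ≤ τ_k ≤ T−τ} (p_{q_k}(τ_k+τ) ⋯ p_{q₁}(τ₁+τ) p_{q₀}(T) p_r(τ))² ‖u(τ)‖² e^{−λ(T−τ)} dτ₁⋯dτ_k dτ ≤ (n_p+1)² ‖u‖²_{L²([0,T],ℝ^m)}. -/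
open MeasureTheory
open scoped ENNReal

lemma perm_eq_of_strictMono {n : ℕ} (y : Fin n → ℝ) (e e' : Equiv.Perm (Fin n))
    (h : StrictMono (y ∘ e)) (h' : StrictMono (y ∘ e')) : e = e' := by
  have inst : WellFoundedLT (Fin n) := inferInstance
  have key : ∀ (a b : Equiv.Perm (Fin n)), StrictMono (y ∘ a) → StrictMono (y ∘ b) →
      StrictMono (a.symm ∘ b : Fin n → Fin n) := by
    intro a b ha hb i j hij
    have : (y ∘ a) (a.symm (b i)) < (y ∘ a) (a.symm (b j)) := by
      simpa [Function.comp] using hb hij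
    exact ha.lt_iff_lt.mp this
  have h1 := key e e' h h'
  have h2 := key e' e h' h
  have hid : ∀ i, e.symm (e' i) = i := by
    intro i
    refine le_antisymm ?_ (@StrictMono.le_apply (Fin n) _ inst _ h1 i)
    have := @StrictMono.le_apply (Fin n) _ inst _ h2 (e.symm (e' i))
    simpa using this
  ext i
  have := hid (e'.symm (e i))
  simp only [Equiv.apply_symm_apply] at this
  exact congrArg Fin.val (by simpa using congrArg e' this.symm)

lemma volume_monotone_cube_le (n : ℕ) (S : ℝ) (hS : 0 ≤ S) :
    volume {y : Fin n → ℝ | Monotone y ∧ ∀ i, y i ∈ Set.Icc 0 S}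
      ≤ ENNReal.ofReal (S ^ n / n.factorial) := by
  set A : Set (Fin n → ℝ) := {y | StrictMono y ∧ ∀ i, y i ∈ Set.Icc 0 S} with hA
  have hAmeas : MeasurableSet A := by
    have : A = (⋂ (i : Fin n), ⋂ (j : Fin n), ⋂ (_ : i < j), {y : Fin n → ℝ | y i < y j})
        ∩ ⋂ i, (fun y : Fin n → ℝ => y i) ⁻¹' Set.Icc 0 S := by
      ext y
      simp only [hA, Set.mem_setOf_eq, Set.mem_inter_iff, Set.mem_iInter, Set.mem_preimage]
      constructor
      · rintro ⟨h1, h2⟩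
        exact ⟨fun i j hij => h1 hij, h2⟩
      · rintro ⟨h1, h2⟩
        exact ⟨fun i j hij => h1 i j hij, h2⟩
    rw [this]
    exact (MeasurableSet.iInter fun i => MeasurableSet.iInter fun j =>
        MeasurableSet.iInter fun _ =>
          measurableSet_lt (measurable_pi_apply i) (measurable_pi_apply j)).inter
      (MeasurableSet.iInter fun i => (measurable_pi_apply i) measurableSet_Icc)
  -- the permuted copies
  set B : Equiv.Perm (Fin n) → Set (Fin n → ℝ) :=
    fun σ => (MeasurableEquiv.piCongrLeft (fun _ : Fin n => ℝ) σ) ⁻¹' A with hB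
  have hpiapp : ∀ (σ : Equiv.Perm (Fin n)) (y : Fin n → ℝ) (i : Fin n),
      (MeasurableEquiv.piCongrLeft (fun _ : Fin n => ℝ) σ) y i = y (σ.symm i) := by
    intro σ y i
    conv_lhs => rw [← Equiv.apply_symm_apply σ i]
    rw [MeasurableEquiv.piCongrLeft_apply_apply]
  have hBmem : ∀ σ y, y ∈ B σ ↔ StrictMono (y ∘ σ.symm) ∧ ∀ i, y (σ.symm i) ∈ Set.Icc 0 S := by
    intro σ y
    simp only [hB, Set.mem_preimage, hA, Set.mem_setOf_eq]
    constructor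
    · rintro ⟨h1, h2⟩
      refine ⟨fun a b hab => ?_, fun i => by simpa [hpiapp] using h2 i⟩
      have := h1 hab
      simpa [hpiapp, Function.comp] using this
    · rintro ⟨h1, h2⟩
      refine ⟨fun a b hab => ?_, fun i => by simpa [hpiapp] using h2 i⟩
      simpa [hpiapp] using h1 hab
  have hBvol : ∀ σ, volume (B σ) = volume A := fun σ =>
    (volume_measurePreserving_piCongrLeft (fun _ : Fin n => ℝ) σ).measure_preimage
      hAmeas.nullMeasurableSet
  have hBmeas : ∀ σ, MeasurableSet (B σ) := fun σ =>
    (MeasurableEquiv.piCongrLeft (fun _ : Fin n => ℝ) σ).measurable hAmeas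
  have hBdisj : Pairwise (Function.onFun Disjoint B) := by
    intro σ σ' hne
    refine Set.disjoint_left.mpr fun y hy hy' => hne ?_
    have h1 := ((hBmem σ y).mp hy).1
    have h2 := ((hBmem σ' y).mp hy').1
    have := perm_eq_of_strictMono y σ.symm σ'.symm h1 h2
    have := congrArg Equiv.symm this
    simpa using this
  -- union is inside the cube
  have hcube : (⋃ σ, B σ) ⊆ Set.Icc (0 : Fin n → ℝ) (fun _ => S) := by
    rintro y ⟨s, ⟨σ, rfl⟩, hy⟩
    have h2 := ((hBmem σ y).mp hy).2
    constructor
    · intro i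
      have := (h2 (σ i)).1
      simpa using this
    · intro i
      have := (h2 (σ i)).2
      simpa using this
  have hcubevol : volume (Set.Icc (0 : Fin n → ℝ) (fun _ => S)) = ENNReal.ofReal (S ^ n) := by
    rw [Real.volume_Icc_pi]
    simp [Finset.prod_const, ← ENNReal.ofReal_pow hS]
  have hsum : (n.factorial : ℝ≥0∞) * volume A ≤ ENNReal.ofReal (S ^ n) := by
    have h1 : ∑' σ : Equiv.Perm (Fin n), volume (B σ) = volume (⋃ σ, B σ) :=
      (measure_iUnion hBdisj hBmeas).symm
    have h2 : ∑' σ : Equiv.Perm (Fin n), volume (B σ) = (n.factorial : ℝ≥0∞) * volume A := by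
      rw [tsum_fintype]
      simp [hBvol, Finset.sum_const, Fintype.card_perm, nsmul_eq_mul]
    calc (n.factorial : ℝ≥0∞) * volume A = volume (⋃ σ, B σ) := by rw [← h2, h1]
      _ ≤ _ := le_trans (measure_mono hcube) (le_of_eq hcubevol)
  -- the monotone set is a.e. contained in A
  have hMA : volume {y : Fin n → ℝ | Monotone y ∧ ∀ i, y i ∈ Set.Icc 0 S} ≤ volume A := by
    set N : Set (Fin n → ℝ) := ⋃ (i : Fin n), ⋃ (j : Fin n), ⋃ (_ : i ≠ j), {y | y i = y j}
      with hN
    have hNnull : volume N = 0 := by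
      refine measure_iUnion_null fun i => measure_iUnion_null fun j =>
        measure_iUnion_null fun hij => ?_
      have hker : {y : Fin n → ℝ | y i = y j}
          = (LinearMap.ker ((LinearMap.proj i : (Fin n → ℝ) →ₗ[ℝ] ℝ) - LinearMap.proj j) :
              Submodule ℝ (Fin n → ℝ)) := by
        ext y
        simp [LinearMap.mem_ker, sub_eq_zero]
      rw [hker]
      refine Measure.addHaar_submodule volume _ fun htop => ?_
      have h1 : (Pi.single i 1 : Fin n → ℝ) ∈
          LinearMap.ker ((LinearMap.proj i : (Fin n → ℝ) →ₗ[ℝ] ℝ) - LinearMap.proj j) := by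
        rw [htop]; trivial
      simp [LinearMap.mem_ker, Pi.single_apply, hij, Ne.symm hij] at h1
    have hsub : {y : Fin n → ℝ | Monotone y ∧ ∀ i, y i ∈ Set.Icc 0 S} ⊆ A ∪ N := by
      rintro y ⟨hmono, hic⟩
      by_cases hsm : StrictMono y
      · exact Or.inl ⟨hsm, hic⟩
      · right
        rw [StrictMono] at hsm
        push_neg at hsm
        obtain ⟨a, b, hab, hle⟩ := hsm
        have : y a = y b := le_antisymm (hmono hab.le) hle
        exact Set.mem_iUnion.mpr ⟨a, Set.mem_iUnion.mpr ⟨b,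
          Set.mem_iUnion.mpr ⟨hab.ne, this⟩⟩⟩
    calc volume {y : Fin n → ℝ | Monotone y ∧ ∀ i, y i ∈ Set.Icc 0 S}
        ≤ volume (A ∪ N) := measure_mono hsub
      _ ≤ volume A + volume N := measure_union_le _ _
      _ = volume A := by rw [hNnull, add_zero]
  refine le_trans hMA ?_
  have hfne : (n.factorial : ℝ≥0∞) ≠ 0 := by
    exact_mod_cast Nat.factorial_ne_zero n
  have hfnt : (n.factorial : ℝ≥0∞) ≠ ⊤ := by simp
  have hstep : volume A ≤ ENNReal.ofReal (S ^ n) / (n.factorial : ℝ≥0∞) :=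
    (ENNReal.le_div_iff_mul_le (Or.inl hfne) (Or.inl hfnt)).mpr
      (by rw [mul_comm]; exact hsum)
  refine le_trans hstep (le_of_eq ?_)
  rw [ENNReal.ofReal_div_of_pos (by exact_mod_cast Nat.factorial_pos n)]
  congr 1
  simp [ENNReal.ofReal_natCast]

lemma sset_measurable (T : ℝ) (k : ℕ) :
    MeasurableSet {x : ℝ × (Fin (k + 1) → ℝ) |
      0 ≤ x.1 ∧ x.1 ≤ T ∧ 0 ≤ x.2 0 ∧
        (∀ j : Fin k, x.2 j.castSucc ≤ x.2 j.succ) ∧ x.2 (Fin.last k) ≤ T - x.1} := by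
  have h1 : MeasurableSet {x : ℝ × (Fin (k + 1) → ℝ) | 0 ≤ x.1} :=
    measurableSet_le measurable_const measurable_fst
  have h2 : MeasurableSet {x : ℝ × (Fin (k + 1) → ℝ) | x.1 ≤ T} :=
    measurableSet_le measurable_fst measurable_const
  have h3 : MeasurableSet {x : ℝ × (Fin (k + 1) → ℝ) | 0 ≤ x.2 0} :=
    measurableSet_le measurable_const (measurable_snd.eval (a := 0))
  have h4 : MeasurableSet {x : ℝ × (Fin (k + 1) → ℝ) |
      ∀ j : Fin k, x.2 j.castSucc ≤ x.2 j.succ} := by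
    have : {x : ℝ × (Fin (k + 1) → ℝ) | ∀ j : Fin k, x.2 j.castSucc ≤ x.2 j.succ}
        = ⋂ j : Fin k, {x : ℝ × (Fin (k + 1) → ℝ) | x.2 j.castSucc ≤ x.2 j.succ} := by
      ext x; simp
    rw [this]
    exact MeasurableSet.iInter fun j => measurableSet_le
      (measurable_snd.eval) (measurable_snd.eval)
  have h5 : MeasurableSet {x : ℝ × (Fin (k + 1) → ℝ) | x.2 (Fin.last k) ≤ T - x.1} :=
    measurableSet_le (measurable_snd.eval)
      (measurable_const.sub measurable_fst)
  exact h1.inter (h2.inter (h3.inter (h4.inter h5)))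

lemma lintegral_sset_fst_le (T : ℝ) (k : ℕ) (g : ℝ → ℝ≥0∞) (hg : Measurable g) :
    ∫⁻ x : ℝ × (Fin (k + 1) → ℝ) in
        {x : ℝ × (Fin (k + 1) → ℝ) | 0 ≤ x.1 ∧ x.1 ≤ T ∧ 0 ≤ x.2 0 ∧
          (∀ j : Fin k, x.2 j.castSucc ≤ x.2 j.succ) ∧ x.2 (Fin.last k) ≤ T - x.1},
        g x.1
      ≤ ∫⁻ τ in Set.Icc (0 : ℝ) T,
          g τ * ENNReal.ofReal ((T - τ) ^ (k + 1) / (k + 1).factorial) := by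
  set S : Set (ℝ × (Fin (k + 1) → ℝ)) :=
    {x : ℝ × (Fin (k + 1) → ℝ) | 0 ≤ x.1 ∧ x.1 ≤ T ∧ 0 ≤ x.2 0 ∧
      (∀ j : Fin k, x.2 j.castSucc ≤ x.2 j.succ) ∧ x.2 (Fin.last k) ≤ T - x.1} with hSdef
  have hS : MeasurableSet S := sset_measurable T k
  have key : ∫⁻ x : ℝ × (Fin (k + 1) → ℝ) in S, g x.1
      = ∫⁻ a : ℝ, g a * volume (Prod.mk a ⁻¹' S) := by
    rw [← lintegral_indicator hS]
    rw [Measure.volume_eq_prod]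
    have hmeas : Measurable (S.indicator (fun x : ℝ × (Fin (k + 1) → ℝ) => g x.1)) :=
      Measurable.indicator (hg.comp measurable_fst) hS
    rw [lintegral_prod _ hmeas.aemeasurable]
    congr 1
    ext a
    have : (fun b : Fin (k + 1) → ℝ => S.indicator (fun x => g x.1) (a, b))
        = (Prod.mk a ⁻¹' S).indicator (fun _ => g a) := by
      ext b
      by_cases hab : (a, b) ∈ S <;> simp [Set.indicator, hab]
    rw [this, lintegral_indicator (measurable_prodMk_left hS), setLIntegral_const]
  rw [key]
  have hbound : ∀ a : ℝ,
      g a * volume (Prod.mk a ⁻¹' S)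
        ≤ (Set.Icc (0 : ℝ) T).indicator
            (fun a => g a * ENNReal.ofReal ((T - a) ^ (k + 1) / (k + 1).factorial)) a := by
    intro a
    by_cases ha : a ∈ Set.Icc (0 : ℝ) T
    · rw [Set.indicator_of_mem ha]
      refine mul_le_mul_right ?_ _
      refine le_trans (measure_mono ?_)
        (volume_monotone_cube_le (k + 1) (T - a) (by linarith [ha.2]))
      rintro y ⟨_, _, h0, hchain, hlast⟩
      have hmono : Monotone y := Fin.monotone_iff_le_succ.mpr hchain
      refine ⟨hmono, fun i => ⟨le_trans h0 (hmono (Fin.zero_le i)), le_trans (hmono (Fin.le_last i)) hlast⟩⟩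
    · have : Prod.mk a ⁻¹' S = ∅ := by
        ext y
        simp only [Set.mem_preimage, hSdef, Set.mem_setOf_eq, Set.mem_empty_iff_false,
          iff_false]
        rintro ⟨h1, h2, _⟩
        exact ha ⟨h1, h2⟩
      rw [this, Set.indicator_of_notMem ha]
      simp
  refine le_trans (lintegral_mono hbound) (le_of_eq ?_)
  rw [lintegral_indicator measurableSet_Icc]

lemma tsum_ofReal_exp_le (a : ℝ) (ha : 0 ≤ a) :
    ∑' k : ℕ, ENNReal.ofReal (a ^ (k + 1) / (k + 1).factorial)
      ≤ ENNReal.ofReal (Real.exp a - 1) := by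
  refine tsum_le_of_sum_le' zero_le fun s => ?_
  set N := s.sup id + 1 with hN
  have hsub : s ⊆ Finset.range N := fun i hi =>
    Finset.mem_range.mpr (Nat.lt_succ_of_le (Finset.le_sup (f := id) hi))
  refine le_trans (Finset.sum_le_sum_of_subset hsub) ?_
  rw [← ENNReal.ofReal_sum_of_nonneg (fun i _ => by positivity)]
  refine ENNReal.ofReal_le_ofReal ?_
  have key : ∑ k ∈ Finset.range N, a ^ (k + 1) / ((k + 1).factorial : ℝ)
      = (∑ i ∈ Finset.range (N + 1), a ^ i / (i.factorial : ℝ)) - 1 := by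
    rw [Finset.sum_range_succ' (fun i => a ^ i / (i.factorial : ℝ)) N]
    simp
  rw [key]
  have := Real.sum_le_exp_of_nonneg ha (N + 1)
  linarith

lemma sq_le_one_of_mem_Icc {x : ℝ} (hx : x ∈ Set.Icc (-1 : ℝ) 1) : x ^ 2 ≤ 1 := by
  nlinarith [hx.1, hx.2]


/-- the squared `H₂`-norm series of the feature element `φ^{T,u,p}` associated
with an input `u ∈ L²([0,T],ℝ^m)` and scheduling signals `p₀,…,p_{n_p}` with values in
`[−1,1]` is bounded by `(n_p+1)² ‖u‖²_{L²([0,T])}`, provided `λ ≥ n_p`.  The sum over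
`k ≥ 1` (with `q₁,…,q_k ∈ {1,…,n_p}`) is indexed by tuples `q : Fin (k+1) → Fin n_p`
(embedded in `{0,…,n_p}` by `Fin.succ`), and each iterated integral over
`{0 ≤ τ₁ ≤ ⋯ ≤ τ_k ≤ T − τ, τ ∈ [0,T]}` is a Lebesgue integral over
`ℝ × (Fin (k+1) → ℝ)`. -/
theorem feature_norm_bound {m : ℕ} (T : ℝ) (hT : 0 < T) (np : ℕ) (hnp : 1 ≤ np)
    (lam : ℝ) (hlam : (np : ℝ) ≤ lam)
    (u : ℝ → EuclideanSpace ℝ (Fin m))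
    (hu : MemLp u 2 (volume.restrict (Set.Icc (0 : ℝ) T)))
    (p : Fin (np + 1) → ℝ → ℝ) (hpmeas : ∀ i, Measurable (p i))
    (hpbound : ∀ i, ∀ t ∈ Set.Icc (0 : ℝ) T, p i t ∈ Set.Icc (-1 : ℝ) 1) :
    (∑ r : Fin (np + 1), ∑ q : Fin (np + 1),
        ∫⁻ τ in Set.Icc (0 : ℝ) T,
          ENNReal.ofReal
            ((p q T) ^ 2 * (p r τ) ^ 2 * ‖u τ‖ ^ 2 * Real.exp (-(lam * (T - τ)))))
      + ∑' k : ℕ, ∑ r : Fin (np + 1), ∑ q₀ : Fin (np + 1),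
          ∑ q : Fin (k + 1) → Fin np,
            ∫⁻ x : ℝ × (Fin (k + 1) → ℝ) in
              {x : ℝ × (Fin (k + 1) → ℝ) |
                0 ≤ x.1 ∧ x.1 ≤ T ∧ 0 ≤ x.2 0 ∧
                  (∀ j : Fin k, x.2 j.castSucc ≤ x.2 j.succ) ∧
                  x.2 (Fin.last k) ≤ T - x.1},
              ENNReal.ofReal
                (((∏ j, p (q j).succ (x.2 j + x.1)) * p q₀ T * p r x.1) ^ 2 *
                  ‖u x.1‖ ^ 2 * Real.exp (-(lam * (T - x.1))))
      ≤ ENNReal.ofReal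
          (((np : ℝ) + 1) ^ 2 * ∫ τ in Set.Icc (0 : ℝ) T, ‖u τ‖ ^ 2) := by
  classical
  set μT := volume.restrict (Set.Icc (0 : ℝ) T) with hμT
  set v : ℝ → EuclideanSpace ℝ (Fin m) := hu.1.mk u with hvdef
  have hv : StronglyMeasurable v := hu.1.stronglyMeasurable_mk
  have hae : u =ᵐ[μT] v := hu.1.ae_eq_mk
  set g : ℝ → ℝ≥0∞ :=
    fun τ => ENNReal.ofReal (‖v τ‖ ^ 2 * Real.exp (-(lam * (T - τ)))) with hgdef
  have hgmeas : Measurable g := by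
    apply Measurable.ennreal_ofReal
    exact ((hv.measurable.norm.pow_const 2).mul
      (Real.measurable_exp.comp ((measurable_const.mul
        (measurable_const.sub measurable_id)).neg)))
  set C : ℝ≥0∞ := ((np + 1 : ℕ) : ℝ≥0∞) ^ 2 with hC
  have hTmem : T ∈ Set.Icc (0 : ℝ) T := ⟨hT.le, le_refl T⟩
  -- First sum
  have hfirst : (∑ r : Fin (np + 1), ∑ q : Fin (np + 1),
        ∫⁻ τ in Set.Icc (0 : ℝ) T,
          ENNReal.ofReal
            ((p q T) ^ 2 * (p r τ) ^ 2 * ‖u τ‖ ^ 2 * Real.exp (-(lam * (T - τ)))))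
      ≤ C * ∫⁻ τ in Set.Icc (0 : ℝ) T, g τ := by
    have hterm : ∀ r q : Fin (np + 1),
        (∫⁻ τ in Set.Icc (0 : ℝ) T,
          ENNReal.ofReal
            ((p q T) ^ 2 * (p r τ) ^ 2 * ‖u τ‖ ^ 2 * Real.exp (-(lam * (T - τ)))))
        ≤ ∫⁻ τ in Set.Icc (0 : ℝ) T, g τ := by
      intro r q
      refine lintegral_mono_ae ?_
      filter_upwards [hae, ae_restrict_mem measurableSet_Icc] with τ huv hτ
      refine ENNReal.ofReal_le_ofReal ?_
      have hq := sq_le_one_of_mem_Icc (hpbound q T hTmem)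
      have hr := sq_le_one_of_mem_Icc (hpbound r τ hτ)
      have h1 : (p q T) ^ 2 * (p r τ) ^ 2 ≤ 1 :=
        mul_le_one₀ hq (sq_nonneg _) hr
      calc (p q T) ^ 2 * (p r τ) ^ 2 * ‖u τ‖ ^ 2 * Real.exp (-(lam * (T - τ)))
          ≤ 1 * ‖u τ‖ ^ 2 * Real.exp (-(lam * (T - τ))) := by
            refine mul_le_mul_of_nonneg_right
              (mul_le_mul_of_nonneg_right h1 (sq_nonneg _)) (Real.exp_pos _).le
        _ = ‖v τ‖ ^ 2 * Real.exp (-(lam * (T - τ))) := by rw [one_mul, huv]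
    calc (∑ r : Fin (np + 1), ∑ q : Fin (np + 1),
        ∫⁻ τ in Set.Icc (0 : ℝ) T,
          ENNReal.ofReal
            ((p q T) ^ 2 * (p r τ) ^ 2 * ‖u τ‖ ^ 2 * Real.exp (-(lam * (T - τ)))))
        ≤ ∑ _r : Fin (np + 1), ∑ _q : Fin (np + 1),
            ∫⁻ τ in Set.Icc (0 : ℝ) T, g τ :=
          Finset.sum_le_sum fun r _ => Finset.sum_le_sum fun q _ => hterm r q
      _ = C * ∫⁻ τ in Set.Icc (0 : ℝ) T, g τ := by
          simp only [Finset.sum_const, Finset.card_univ, Fintype.card_fin, nsmul_eq_mul]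
          rw [← mul_assoc, hC, sq]
  -- null set for u ≠ v, lifted to the product space
  obtain ⟨D, hDsub, hDmeas, hDnull⟩ :=
    exists_measurable_superset_of_null (s := {τ : ℝ | ¬ u τ = v τ} ∩ Set.Icc (0 : ℝ) T)
      (by
        have h0 : μT {τ : ℝ | ¬ u τ = v τ} = 0 := hae
        rwa [hμT, Measure.restrict_apply' measurableSet_Icc] at h0)
  -- Second part, term by term
  set J : ℕ → ℝ≥0∞ := fun k => ∫⁻ τ in Set.Icc (0 : ℝ) T,
    g τ * ENNReal.ofReal ((T - τ) ^ (k + 1) / (k + 1).factorial) with hJ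
  have hsecond : ∀ k : ℕ, (∑ r : Fin (np + 1), ∑ q₀ : Fin (np + 1),
          ∑ q : Fin (k + 1) → Fin np,
            ∫⁻ x : ℝ × (Fin (k + 1) → ℝ) in
              {x : ℝ × (Fin (k + 1) → ℝ) |
                0 ≤ x.1 ∧ x.1 ≤ T ∧ 0 ≤ x.2 0 ∧
                  (∀ j : Fin k, x.2 j.castSucc ≤ x.2 j.succ) ∧
                  x.2 (Fin.last k) ≤ T - x.1},
              ENNReal.ofReal
                (((∏ j, p (q j).succ (x.2 j + x.1)) * p q₀ T * p r x.1) ^ 2 *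
                  ‖u x.1‖ ^ 2 * Real.exp (-(lam * (T - x.1)))))
      ≤ C * ((np : ℝ≥0∞) ^ (k + 1) * J k) := by
    intro k
    set Sk : Set (ℝ × (Fin (k + 1) → ℝ)) :=
      {x : ℝ × (Fin (k + 1) → ℝ) | 0 ≤ x.1 ∧ x.1 ≤ T ∧ 0 ≤ x.2 0 ∧
        (∀ j : Fin k, x.2 j.castSucc ≤ x.2 j.succ) ∧ x.2 (Fin.last k) ≤ T - x.1} with hSk
    have hSkmeas : MeasurableSet Sk := sset_measurable T k
    have haep : ∀ᵐ x : ℝ × (Fin (k + 1) → ℝ) ∂(volume.restrict Sk), u x.1 = v x.1 := by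
      rw [Filter.Eventually, mem_ae_iff]
      rw [Measure.restrict_apply' hSkmeas]
      refine measure_mono_null (t := D ×ˢ (Set.univ : Set (Fin (k + 1) → ℝ))) ?_ ?_
      · rintro x ⟨hx1, hx2⟩
        exact ⟨hDsub ⟨hx1, hx2.1, hx2.2.1⟩, trivial⟩
      · rw [Measure.volume_eq_prod, Measure.prod_prod, hDnull, zero_mul]
    have hterm : ∀ (r q₀ : Fin (np + 1)) (q : Fin (k + 1) → Fin np),
        (∫⁻ x : ℝ × (Fin (k + 1) → ℝ) in Sk,
            ENNReal.ofReal
              (((∏ j, p (q j).succ (x.2 j + x.1)) * p q₀ T * p r x.1) ^ 2 *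
                ‖u x.1‖ ^ 2 * Real.exp (-(lam * (T - x.1)))))
          ≤ J k := by
      intro r q₀ q
      refine le_trans ?_ (lintegral_sset_fst_le T k g hgmeas)
      refine lintegral_mono_ae ?_
      filter_upwards [haep, ae_restrict_mem hSkmeas] with x huv hx
      obtain ⟨hx1, hx2, hx0, hxchain, hxlast⟩ := hx
      have hmono : Monotone x.2 := Fin.monotone_iff_le_succ.mpr hxchain
      refine ENNReal.ofReal_le_ofReal ?_
      have hbig : ((∏ j, p (q j).succ (x.2 j + x.1)) * p q₀ T * p r x.1) ^ 2 ≤ 1 := by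
        have habs : |(∏ j, p (q j).succ (x.2 j + x.1)) * p q₀ T * p r x.1| ≤ 1 := by
          rw [abs_mul, abs_mul, Finset.abs_prod]
          have hprod : (∏ j, |p (q j).succ (x.2 j + x.1)|) ≤ 1 := by
            refine Finset.prod_le_one (fun j _ => abs_nonneg _) (fun j _ => ?_)
            have hmem : x.2 j + x.1 ∈ Set.Icc (0 : ℝ) T := by
              constructor
              · exact add_nonneg (le_trans hx0 (hmono (Fin.zero_le j))) hx1
              · have := hmono (Fin.le_last j)
                linarith
            have := hpbound (q j).succ _ hmem
            exact abs_le.mpr ⟨this.1, this.2⟩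
          have h2 : |p q₀ T| ≤ 1 := by
            have := hpbound q₀ T hTmem; exact abs_le.mpr ⟨this.1, this.2⟩
          have h3 : |p r x.1| ≤ 1 := by
            have := hpbound r x.1 ⟨hx1, hx2⟩; exact abs_le.mpr ⟨this.1, this.2⟩
          exact mul_le_one₀ (mul_le_one₀ hprod (abs_nonneg _) h2) (abs_nonneg _) h3
        have := pow_le_one₀ (abs_nonneg _) habs (n := 2)
        rwa [sq_abs] at this
      calc ((∏ j, p (q j).succ (x.2 j + x.1)) * p q₀ T * p r x.1) ^ 2 *
            ‖u x.1‖ ^ 2 * Real.exp (-(lam * (T - x.1)))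
          ≤ 1 * ‖u x.1‖ ^ 2 * Real.exp (-(lam * (T - x.1))) :=
            mul_le_mul_of_nonneg_right
              (mul_le_mul_of_nonneg_right hbig (sq_nonneg _)) (Real.exp_pos _).le
        _ = ‖v x.1‖ ^ 2 * Real.exp (-(lam * (T - x.1))) := by rw [one_mul, huv]
    calc (∑ r : Fin (np + 1), ∑ q₀ : Fin (np + 1), ∑ q : Fin (k + 1) → Fin np,
          ∫⁻ x : ℝ × (Fin (k + 1) → ℝ) in Sk,
            ENNReal.ofReal
              (((∏ j, p (q j).succ (x.2 j + x.1)) * p q₀ T * p r x.1) ^ 2 *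
                ‖u x.1‖ ^ 2 * Real.exp (-(lam * (T - x.1)))))
        ≤ ∑ _r : Fin (np + 1), ∑ _q₀ : Fin (np + 1), ∑ _q : Fin (k + 1) → Fin np, J k :=
          Finset.sum_le_sum fun r _ => Finset.sum_le_sum fun q₀ _ =>
            Finset.sum_le_sum fun q _ => hterm r q₀ q
      _ = C * ((np : ℝ≥0∞) ^ (k + 1) * J k) := by
          simp only [Finset.sum_const, Finset.card_univ, Fintype.card_fin,
            Fintype.card_fun, nsmul_eq_mul]
          rw [hC, sq]
          push_cast
          ring
  have hnp0 : (0:ℝ) ≤ (np : ℝ) := Nat.cast_nonneg np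
  set K : ℝ≥0∞ := ∫⁻ τ in Set.Icc (0 : ℝ) T,
    g τ * ENNReal.ofReal (Real.exp ((np : ℝ) * (T - τ)) - 1) with hK
  have hgk : ∀ k : ℕ, Measurable (fun τ : ℝ =>
      g τ * ENNReal.ofReal (((np : ℝ) * (T - τ)) ^ (k + 1) / (k + 1).factorial)) := by
    intro k
    exact hgmeas.mul (Measurable.ennreal_ofReal
      (((measurable_const.mul (measurable_const.sub measurable_id)).pow_const (k + 1)).div_const _))
  have hJk : ∀ k : ℕ, (np : ℝ≥0∞) ^ (k + 1) * J k
      = ∫⁻ τ in Set.Icc (0 : ℝ) T,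
          g τ * ENNReal.ofReal (((np : ℝ) * (T - τ)) ^ (k + 1) / (k + 1).factorial) := by
    intro k
    have hm : Measurable (fun τ : ℝ =>
        g τ * ENNReal.ofReal ((T - τ) ^ (k + 1) / ((k + 1).factorial : ℝ))) :=
      hgmeas.mul (Measurable.ennreal_ofReal
        (((measurable_const.sub measurable_id).pow_const (k + 1)).div_const _))
    simp only [hJ]
    rw [← lintegral_const_mul _ hm]
    refine setLIntegral_congr_fun measurableSet_Icc (fun τ hτ => ?_)
    rw [← mul_assoc, mul_comm ((np : ℝ≥0∞) ^ (k + 1)) (g τ), mul_assoc]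
    congr 1
    have h1 : ((np : ℝ≥0∞)) ^ (k + 1) = ENNReal.ofReal ((np : ℝ) ^ (k + 1)) := by
      rw [ENNReal.ofReal_pow hnp0, ENNReal.ofReal_natCast]
    rw [h1, ← ENNReal.ofReal_mul (by positivity)]
    congr 1
    rw [mul_pow]
    ring
  have hsum2 : ∑' k : ℕ, (np : ℝ≥0∞) ^ (k + 1) * J k ≤ K := by
    have heq : ∑' k : ℕ, (np : ℝ≥0∞) ^ (k + 1) * J k
        = ∫⁻ τ in Set.Icc (0 : ℝ) T, ∑' k : ℕ,
            g τ * ENNReal.ofReal (((np : ℝ) * (T - τ)) ^ (k + 1) / (k + 1).factorial) :=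
      (tsum_congr hJk).trans (lintegral_tsum fun k => (hgk k).aemeasurable).symm
    rw [heq, hK]
    refine lintegral_mono_ae ?_
    filter_upwards [ae_restrict_mem measurableSet_Icc] with τ hτ
    rw [ENNReal.tsum_mul_left]
    refine mul_le_mul_right ?_ _
    exact tsum_ofReal_exp_le _ (mul_nonneg hnp0 (by linarith [hτ.2]))
  have htsum : (∑' k : ℕ, ∑ r : Fin (np + 1), ∑ q₀ : Fin (np + 1),
          ∑ q : Fin (k + 1) → Fin np,
            ∫⁻ x : ℝ × (Fin (k + 1) → ℝ) in
              {x : ℝ × (Fin (k + 1) → ℝ) |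
                0 ≤ x.1 ∧ x.1 ≤ T ∧ 0 ≤ x.2 0 ∧
                  (∀ j : Fin k, x.2 j.castSucc ≤ x.2 j.succ) ∧
                  x.2 (Fin.last k) ≤ T - x.1},
              ENNReal.ofReal
                (((∏ j, p (q j).succ (x.2 j + x.1)) * p q₀ T * p r x.1) ^ 2 *
                  ‖u x.1‖ ^ 2 * Real.exp (-(lam * (T - x.1)))))
      ≤ C * K := by
    calc _ ≤ ∑' k : ℕ, C * ((np : ℝ≥0∞) ^ (k + 1) * J k) := ENNReal.tsum_le_tsum hsecond
      _ = C * ∑' k : ℕ, (np : ℝ≥0∞) ^ (k + 1) * J k := ENNReal.tsum_mul_left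
      _ ≤ C * K := mul_le_mul_right hsum2 _
  refine le_trans (add_le_add hfirst htsum) ?_
  rw [← mul_add]
  have hIK : (∫⁻ τ in Set.Icc (0 : ℝ) T, g τ) + K
      = ∫⁻ τ in Set.Icc (0 : ℝ) T,
          (g τ + g τ * ENNReal.ofReal (Real.exp ((np : ℝ) * (T - τ)) - 1)) :=
    (lintegral_add_left hgmeas _).symm
  rw [hIK]
  have hfin : (∫⁻ τ in Set.Icc (0 : ℝ) T,
        (g τ + g τ * ENNReal.ofReal (Real.exp ((np : ℝ) * (T - τ)) - 1)))
      ≤ ∫⁻ τ in Set.Icc (0 : ℝ) T, ENNReal.ofReal (‖v τ‖ ^ 2) := by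
    refine lintegral_mono_ae ?_
    filter_upwards [ae_restrict_mem measurableSet_Icc] with τ hτ
    have hS0 : (0:ℝ) ≤ T - τ := by linarith [hτ.2]
    have hone : (1 : ℝ≥0∞) + ENNReal.ofReal (Real.exp ((np : ℝ) * (T - τ)) - 1)
        = ENNReal.ofReal (Real.exp ((np : ℝ) * (T - τ))) := by
      rw [← ENNReal.ofReal_one, ← ENNReal.ofReal_add (by norm_num)
        (by linarith [Real.one_le_exp (mul_nonneg hnp0 hS0)])]
      ring_nf
    calc g τ + g τ * ENNReal.ofReal (Real.exp ((np : ℝ) * (T - τ)) - 1)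
        = g τ * (1 + ENNReal.ofReal (Real.exp ((np : ℝ) * (T - τ)) - 1)) := by
          rw [mul_add, mul_one]
      _ = g τ * ENNReal.ofReal (Real.exp ((np : ℝ) * (T - τ))) := by rw [hone]
      _ = ENNReal.ofReal ((‖v τ‖ ^ 2 * Real.exp (-(lam * (T - τ)))) *
            Real.exp ((np : ℝ) * (T - τ))) := by
          rw [hgdef, ← ENNReal.ofReal_mul (by positivity)]
      _ ≤ ENNReal.ofReal (‖v τ‖ ^ 2) := by
          refine ENNReal.ofReal_le_ofReal ?_
          rw [mul_assoc, ← Real.exp_add]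
          have hexp : Real.exp (-(lam * (T - τ)) + (np : ℝ) * (T - τ)) ≤ 1 := by
            rw [Real.exp_le_one_iff]
            nlinarith
          nlinarith [sq_nonneg ‖v τ‖, Real.exp_pos (-(lam * (T - τ)) + (np : ℝ) * (T - τ))]
  have hint : Integrable (fun τ => ‖u τ‖ ^ 2) μT := by
    have h2 := hu.integrable_norm_rpow (by norm_num) (by norm_num)
    refine h2.congr (ae_of_all _ fun τ => ?_)
    show ‖u τ‖ ^ (2:ℝ≥0∞).toReal = ‖u τ‖ ^ 2
    rw [show ((2:ℝ≥0∞).toReal) = ((2:ℕ):ℝ) by norm_num, Real.rpow_natCast]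
  have hval : (∫⁻ τ in Set.Icc (0 : ℝ) T, ENNReal.ofReal (‖v τ‖ ^ 2))
      = ENNReal.ofReal (∫ τ in Set.Icc (0 : ℝ) T, ‖u τ‖ ^ 2) := by
    have h1 : (∫⁻ τ in Set.Icc (0 : ℝ) T, ENNReal.ofReal (‖v τ‖ ^ 2))
        = ∫⁻ τ in Set.Icc (0 : ℝ) T, ENNReal.ofReal (‖u τ‖ ^ 2) := by
      refine lintegral_congr_ae ?_
      filter_upwards [hae] with τ h
      rw [h]
    rw [h1]
    exact (ofReal_integral_eq_lintegral_ofReal hint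
      (ae_of_all _ fun τ => sq_nonneg _)).symm
  have hCeq : ENNReal.ofReal (((np : ℝ) + 1) ^ 2) = C := by
    rw [ENNReal.ofReal_pow (by positivity), hC]
    congr 1
    rw [show ((np : ℝ) + 1) = ((np + 1 : ℕ) : ℝ) by push_cast; ring,
      ENNReal.ofReal_natCast]
  rw [ENNReal.ofReal_mul (by positivity), hCeq]
  exact mul_le_mul_right (le_trans hfin (le_of_eq hval)) C
end
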